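/- Let n ≥ 1 and let L'_S(n) be the 4n×4n real symmetric matrix with diagonal entries 4 at positions j ≡ 0 or 1 (mod 4) and 2 at positions j ≡ 2 or 3 (mod 4), entries −1 on the sub- and super-diagonal, corner entries (L'_S)_{1,4n} = (L'_S)_{4n,1} = −1, and all other entries 0. Let μ = 15 + 4√14 and ν = 15 − 4√14. Then L'_S(n) is positive definite (all its eigenvalues λ_1, …, λ_{4n} are positive) and the sum of the reciprocals of its eigenvalues satisfies ∑_{j=1}^{4n} 1/λ_j = (9n√14/14) · (μ^n − ν^n)/(μ^n + ν^n − 2). -/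

import Mathlib

noncomputable def mu : ℝ := 15 + 4 * Real.sqrt 14
noncomputable def nu : ℝ := 15 - 4 * Real.sqrt 14

/-- The matrix `L_S(n)`: 4n×4n, diagonal entries 4 at (1-indexed) positions ≡ 0,1 (mod 4)
and 2 at positions ≡ 2,3 (mod 4), −1 on the sub/super-diagonal, −1 in the corners. -/
def LS' (n : ℕ) : Matrix (Fin (4 * n)) (Fin (4 * n)) ℝ :=
  Matrix.of fun i j =>
    if i.val = j.val then
      (if (i.val + 1) % 4 = 0 ∨ (i.val + 1) % 4 = 1 then 4 else 2)
    else if i.val + 1 = j.val ∨ j.val + 1 = i.val then -1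
    else if (i.val = 0 ∧ j.val = 4 * n - 1) ∨ (j.val = 0 ∧ i.val = 4 * n - 1) then -1
    else 0

/-!
`LS' n` is the periodic Jacobi matrix `diag a - P - P⁻¹` of size `N = 4n`, where `P` is the
cyclic shift and the diagonal `a` is 4-periodic with `a ≥ 2`; its quadratic form is
`∑ (a i - 2) x i ^ 2 + ∑ (x i - x (i + 1)) ^ 2 ≥ 0`. Its adjugate `B` is explicit: column `j` is
the sum of the two solutions of `x (k + 1) = a k * x k - x (k - 1)` vanishing at `j` and at
`j + N`, and `L * B = (Δ - 2) • 1`, with `Δ` the trace of the monodromy over one period.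
Over four sites the transfer matrix has trace `30` and determinant `1`, so `Δ` and `trace B`
satisfy `x (n + 2) = 30 x (n + 1) - x n`, whose solutions are combinations of `μ ^ n` and
`ν ^ n`: `Δ = μ ^ n + ν ^ n` and `trace B = n • (9 √14 / 14) (μ ^ n - ν ^ n)`. Since `Δ ≠ 2`, `L`
is invertible, hence positive definite, and `∑ 1 / λ j = trace L⁻¹ = trace B / (Δ - 2)`.
-/

open Matrix

section Continuant

variable {R : Type*} [CommRing R]

/-- `continuant a s (k + 1)` is the determinant of the `k × k` tridiagonal matrix with diagonal
`a s, …, a (s + k - 1)` and `-1` next to the diagonal; with this shift, `continuant a s` is the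
solution of `x (k + 2) = a (s + k) * x (k + 1) - x k` with `x 0 = 0` and `x 1 = 1`. -/
def continuant (a : ℕ → R) (s : ℕ) : ℕ → R
  | 0 => 0
  | 1 => 1
  | k + 2 => a (s + k) * continuant a s (k + 1) - continuant a s k

theorem continuant_add_two (a : ℕ → R) (s k : ℕ) :
    continuant a s (k + 2) = a (s + k) * continuant a s (k + 1) - continuant a s k := rfl

theorem continuant_add_two_left (a : ℕ → R) (s k : ℕ) :
    continuant a s (k + 2) = a s * continuant a (s + 1) (k + 1) - continuant a (s + 2) k := by
  induction k using Nat.twoStepInduction with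
  | zero => simp [continuant]
  | one => simp only [continuant, add_zero, mul_one, sub_zero, sub_left_inj]; ring
  | more k ih₀ ih₁ =>
    rw [continuant_add_two, ih₀, ih₁, continuant_add_two a (s + 1) (k + 1),
      continuant_add_two a (s + 2) k]
    ring_nf

theorem Function.Periodic.continuant {a : ℕ → R} {p : ℕ} (ha : Function.Periodic a p) :
    Function.Periodic (continuant a) p := by
  intro s
  funext k
  induction k using Nat.twoStepInduction with
  | zero => rfl
  | one => rfl
  | more k ih₀ ih₁ => rw [continuant_add_two, continuant_add_two, ih₀, ih₁, add_right_comm, ha]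

def chebyshevRec (t : R) : LinearRecurrence R := ⟨2, ![-1, t]⟩

theorem chebyshevRec_isSolution_iff (t : R) (u : ℕ → R) :
    (chebyshevRec t).IsSolution u ↔ ∀ m, u (m + 2) = t * u (m + 1) - u m := by
  refine forall_congr' fun m => ?_
  show u (m + 2) = ∑ i : Fin 2, ![-1, t] i * u (m + i) ↔ _
  simp [Fin.sum_univ_two, neg_add_eq_sub]

theorem chebyshevRec_eq_of_eq_init {t : R} {u v : ℕ → R}
    (hu : ∀ m, u (m + 2) = t * u (m + 1) - u m) (hv : ∀ m, v (m + 2) = t * v (m + 1) - v m)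
    (h₀ : u 0 = v 0) (h₁ : u 1 = v 1) : u = v := by
  refine ((chebyshevRec t).eq_iff_eqOn_range_order u v ((chebyshevRec_isSolution_iff t u).2 hu)
    ((chebyshevRec_isSolution_iff t v).2 hv)).2 fun k hk => ?_
  simp only [chebyshevRec, Finset.coe_range, Set.mem_Iio] at hk
  interval_cases k <;> assumption

end Continuant

theorem Function.Periodic.sum_range_mul {M : Type*} [AddCommMonoid M] {f : ℕ → M} {p : ℕ}
    (hf : Function.Periodic f p) (q : ℕ) :
    ∑ i ∈ Finset.range (p * q), f i = q • ∑ i ∈ Finset.range p, f i := by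
  induction q with
  | zero => simp
  | succ q ih =>
    rw [mul_add, mul_one, Finset.sum_range_add, ih, succ_nsmul]
    congr 1
    refine Finset.sum_congr rfl fun i _ => ?_
    rw [add_comm, mul_comm]
    simpa using hf.nat_mul q i

namespace Fin

theorem val_sub_eq_ite {N : ℕ} (i j : Fin N) :
    ((i - j : Fin N) : ℕ) = if (j : ℕ) ≤ i then (i : ℕ) - j else N + i - j := by
  split_ifs with h
  · exact Fin.sub_val_of_le h
  · exact Fin.coe_sub_iff_lt.mpr (not_le.mp h)

theorem val_finRotate {N : ℕ} (i : Fin N) :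
    (finRotate N i : ℕ) = if (i : ℕ) + 1 = N then 0 else (i : ℕ) + 1 := by
  obtain ⟨M, rfl⟩ : ∃ M, N = M + 1 := ⟨N - 1, by have := i.isLt; omega⟩
  rw [coe_finRotate]
  simp [Fin.ext_iff]

theorem val_finRotate_inv {N : ℕ} (i : Fin N) :
    ((finRotate N)⁻¹ i : ℕ) = if (i : ℕ) = 0 then N - 1 else (i : ℕ) - 1 := by
  obtain ⟨k, rfl⟩ := (finRotate N).surjective i
  have := k.isLt
  rw [Equiv.Perm.coe_inv, Equiv.symm_apply_apply, val_finRotate]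
  by_cases h : (k : ℕ) + 1 = N <;> simp [h]
  omega

theorem val_finRotate_sub {N : ℕ} (i j : Fin N) :
    ((finRotate N i - j : Fin N) : ℕ) =
      if ((i - j : Fin N) : ℕ) + 1 = N then 0 else ((i - j : Fin N) : ℕ) + 1 := by
  have := i.isLt
  have := val_finRotate i
  simp only [val_sub_eq_ite] at *
  split_ifs at * <;> omega

theorem val_finRotate_inv_sub {N : ℕ} (i j : Fin N) :
    (((finRotate N)⁻¹ i - j : Fin N) : ℕ) =
      if ((i - j : Fin N) : ℕ) = 0 then N - 1 else ((i - j : Fin N) : ℕ) - 1 := by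
  have := j.isLt
  have := val_finRotate_inv i
  simp only [val_sub_eq_ite] at *
  split_ifs at * <;> omega

end Fin

section CyclicJacobi

variable {R : Type*} [CommRing R] (a : ℕ → R) (N : ℕ)

def cyclicJacobi : Matrix (Fin N) (Fin N) R :=
  diagonal (fun i : Fin N => a i) - (finRotate N).permMatrix R - (finRotate N)⁻¹.permMatrix R

/-- The trace of the transfer matrix `T (j + N - 1) ⋯ T j`, where `T s = !![a s, -1; 1, 0]`. -/
def monodromyTrace (j : ℕ) : R :=
  continuant a j (N + 1) - continuant a (j + 1) (N - 1)

/-- Column `j` of `cyclicJacobiAdj`, read from row `j + k`: the sum of the solutions of the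
recurrence of `cyclicJacobi a N` that vanish at row `j` and at row `j + N` respectively. -/
def adjColumn (j k : ℕ) : R :=
  continuant a (j + 1) k + continuant a (j + k + 1) (N - k)

def cyclicJacobiAdj : Matrix (Fin N) (Fin N) R :=
  of fun i j => adjColumn a N j (i - j : Fin N)

variable {N}

theorem adjColumn_add_two {k : ℕ} (j : ℕ) (hk : k + 2 ≤ N) :
    adjColumn a N j (k + 2) = a (j + k + 1) * adjColumn a N j (k + 1) - adjColumn a N j k := by
  have h := continuant_add_two_left a (j + k + 1) (N - k - 2)
  rw [show N - k - 2 + 2 = N - k by omega, show N - k - 2 + 1 = N - (k + 1) by omega] at h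
  simp only [adjColumn, continuant_add_two, h, show N - k - 2 = N - (k + 2) by omega]
  ring_nf

theorem adjColumn_self (j : ℕ) : adjColumn a N j N = adjColumn a N j 0 := by
  simp [adjColumn, continuant]

theorem adjColumn_diag (j : ℕ) (hN : 1 ≤ N) :
    a j * adjColumn a N j 0 - adjColumn a N j 1 - adjColumn a N j (N - 1) =
      monodromyTrace a N j - 2 := by
  have h := continuant_add_two_left a j (N - 1)
  rw [show N - 1 + 2 = N + 1 by omega, show N - 1 + 1 = N by omega] at h
  simp only [adjColumn, monodromyTrace, h, show j + (N - 1) + 1 = j + N by omega,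
    show N - (N - 1) = 1 by omega]
  simp only [continuant, add_zero, tsub_zero]
  ring

variable (N)

theorem cyclicJacobi_mulVec (x : Fin N → R) (i : Fin N) :
    (cyclicJacobi a N *ᵥ x) i = a i * x i - x (finRotate N i) - x ((finRotate N)⁻¹ i) := by
  rw [cyclicJacobi, sub_mulVec, sub_mulVec, permMatrix_mulVec, permMatrix_mulVec]
  simp only [Pi.sub_apply, mulVec_diagonal, Function.comp_apply]

variable {a N}

theorem cyclicJacobi_mul_cyclicJacobiAdj (ha : Function.Periodic a N) :
    cyclicJacobi a N * cyclicJacobiAdj a N =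
      diagonal fun j : Fin N => monodromyTrace a N j - 2 := by
  ext i j
  have hcol : (cyclicJacobi a N * cyclicJacobiAdj a N) i j =
      a i * adjColumn a N j (i - j : Fin N) - adjColumn a N j (finRotate N i - j : Fin N)
        - adjColumn a N j ((finRotate N)⁻¹ i - j : Fin N) :=
    cyclicJacobi_mulVec a N (fun l => cyclicJacobiAdj a N l j) i
  have hai : a i = a (j + (i - j : Fin N)) := by
    rw [Fin.val_sub_eq_ite]
    split_ifs with h
    · congr 1; omega
    · rw [show (j : ℕ) + (N + i - j) = i + N by omega, ha]
  have hk0 : ((i - j : Fin N) : ℕ) = 0 ↔ i = j := by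
    rw [Fin.val_sub_eq_ite, Fin.ext_iff]
    split_ifs <;> omega
  have hsucc (k : ℕ) :
      adjColumn a N j (if k + 1 = N then 0 else k + 1) = adjColumn a N j (k + 1) := by
    split_ifs with h
    · rw [← adjColumn_self a j, h]
    · rfl
  rw [hcol, Fin.val_finRotate_sub, Fin.val_finRotate_inv_sub, hsucc, hai, diagonal_apply]
  set k := ((i - j : Fin N) : ℕ)
  by_cases hij : i = j
  · rw [if_pos (hk0.2 hij), if_pos hij, hk0.2 hij, hij]
    exact adjColumn_diag a j j.pos
  · obtain ⟨l, hl⟩ : ∃ l, k = l + 1 := ⟨k - 1, by have := hk0.not.2 hij; omega⟩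
    have hlN : l + 2 ≤ N := by have := (i - j : Fin N).isLt; omega
    rw [if_neg (hk0.not.2 hij), if_neg hij, hl, adjColumn_add_two a j hlN, Nat.add_sub_cancel,
      ← add_assoc]
    ring

variable (a N)

theorem trace_cyclicJacobiAdj :
    (cyclicJacobiAdj a N).trace = ∑ j : Fin N, continuant a (j + 1) N := by
  refine Finset.sum_congr rfl fun j _ => ?_
  simp [cyclicJacobiAdj, adjColumn, Fin.val_sub_eq_ite, continuant]

end CyclicJacobi

section Real

variable (a : ℕ → ℝ) (N : ℕ)

theorem cyclicJacobi_isHermitian : (cyclicJacobi a N).IsHermitian := by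
  simp only [IsHermitian, cyclicJacobi, conjTranspose_sub, conjTranspose_permMatrix,
    diagonal_conjTranspose, star_trivial, inv_inv]
  abel

theorem dotProduct_cyclicJacobi_mulVec (x : Fin N → ℝ) :
    x ⬝ᵥ (cyclicJacobi a N *ᵥ x) =
      ∑ i : Fin N, ((a i - 2) * x i ^ 2 + (x i - x (finRotate N i)) ^ 2) := by
  have hsq : ∑ i, x (finRotate N i) ^ 2 = ∑ i, x i ^ 2 :=
    Equiv.sum_comp (finRotate N) (fun i => x i ^ 2)
  have hprod : ∑ i, x i * x ((finRotate N)⁻¹ i) = ∑ i, x (finRotate N i) * x i := by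
    rw [← Equiv.sum_comp (finRotate N)]
    simp only [Equiv.Perm.coe_inv, Equiv.symm_apply_apply]
  have hterm (i : Fin N) :
      x i * (a i * x i - x (finRotate N i) - x ((finRotate N)⁻¹ i)) =
        ((a i - 2) * x i ^ 2 + (x i - x (finRotate N i)) ^ 2) + (x i ^ 2 - x (finRotate N i) ^ 2)
          + (x (finRotate N i) * x i - x i * x ((finRotate N)⁻¹ i)) := by
    ring
  simp only [dotProduct, cyclicJacobi_mulVec, hterm, Finset.sum_add_distrib,
    Finset.sum_sub_distrib, hsq, hprod, sub_self, add_zero]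

variable {a} in
theorem cyclicJacobi_posSemidef (ha : ∀ i, 2 ≤ a i) : (cyclicJacobi a N).PosSemidef := by
  refine .of_dotProduct_mulVec_nonneg (cyclicJacobi_isHermitian a N) fun x => ?_
  rw [star_trivial, dotProduct_cyclicJacobi_mulVec]
  exact Finset.sum_nonneg fun i _ => by
    nlinarith [ha i, sq_nonneg (x i), sq_nonneg (x i - x (finRotate N i))]

end Real

theorem Matrix.IsHermitian.trace_inv {𝕜 n : Type*} [RCLike 𝕜] [Fintype n] [DecidableEq n]
    {A : Matrix n n 𝕜} (hA : A.IsHermitian) (h : ∀ i, hA.eigenvalues i ≠ 0) :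
    A⁻¹.trace = ∑ i, (hA.eigenvalues i : 𝕜)⁻¹ := by
  have hinv : A⁻¹ = Unitary.conjStarAlgAut 𝕜 _ hA.eigenvectorUnitary
      (diagonal fun i => (hA.eigenvalues i : 𝕜)⁻¹) := by
    refine inv_eq_right_inv ?_
    conv_lhs => enter [1]; rw [hA.spectral_theorem]
    rw [← map_mul, diagonal_mul_diagonal,
      ← map_one (Unitary.conjStarAlgAut 𝕜 _ hA.eigenvectorUnitary)]
    congr
    simp [h]
  rw [hinv, Unitary.conjStarAlgAut_apply, trace_mul_cycle, Unitary.coe_star_mul_self, one_mul,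
    trace_diagonal]

def lsDiag (s : ℕ) : ℝ := if (s + 1) % 4 = 0 ∨ (s + 1) % 4 = 1 then 4 else 2

theorem LS'_eq_cyclicJacobi (n : ℕ) : LS' n = cyclicJacobi lsDiag (4 * n) := by
  ext i j
  have := i.isLt
  have := j.isLt
  have hi := Fin.val_finRotate i
  have hj := Fin.val_finRotate j
  simp only [LS', cyclicJacobi, lsDiag, of_apply, Matrix.sub_apply, diagonal_apply,
    PEquiv.toMatrix_apply, Equiv.toPEquiv_apply, Option.mem_def, Option.some_inj,
    Equiv.Perm.inv_eq_iff_eq, Fin.ext_iff]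
  split_ifs at * <;> first | omega | norm_num

theorem two_le_lsDiag (s : ℕ) : 2 ≤ lsDiag s := by
  unfold lsDiag; split_ifs <;> norm_num

theorem lsDiag_periodic : Function.Periodic lsDiag 4 := by
  intro s
  simp only [lsDiag, show (s + 4 + 1) % 4 = (s + 1) % 4 by omega]

theorem lsDiag_of_mod_eq {s t : ℕ} (h : s % 4 = t % 4) : lsDiag s = lsDiag t := by
  rw [← lsDiag_periodic.map_mod_nat s, h, lsDiag_periodic.map_mod_nat]

theorem lsDiag_periodic_four_mul (n : ℕ) : Function.Periodic lsDiag (4 * n) :=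
  fun s => lsDiag_of_mod_eq (by omega)

theorem continuant_lsDiag_of_mod_eq {s t : ℕ} (h : s % 4 = t % 4) :
    continuant lsDiag s = continuant lsDiag t := by
  rw [← lsDiag_periodic.continuant.map_mod_nat s, h, lsDiag_periodic.continuant.map_mod_nat]

theorem continuant_lsDiag_add_eight (s k : ℕ) :
    continuant lsDiag s (k + 8) = 30 * continuant lsDiag s (k + 4) - continuant lsDiag s k := by
  have hs : s % 4 < 4 := Nat.mod_lt _ (by norm_num)
  induction k using Nat.twoStepInduction with
  | zero =>
    rw [continuant_lsDiag_of_mod_eq (Nat.mod_mod s 4).symm]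
    interval_cases s % 4 <;> norm_num [continuant, lsDiag]
  | one =>
    rw [continuant_lsDiag_of_mod_eq (Nat.mod_mod s 4).symm]
    interval_cases s % 4 <;> norm_num [continuant, lsDiag]
  | more k ih₀ ih₁ =>
    have h₈ : lsDiag (s + (k + 8)) = lsDiag (s + k) := lsDiag_of_mod_eq (by omega)
    have h₄ : lsDiag (s + (k + 4)) = lsDiag (s + k) := lsDiag_of_mod_eq (by omega)
    rw [continuant_add_two, h₈, ih₁, ih₀, continuant_add_two lsDiag s (k + 4), h₄,
      continuant_add_two lsDiag s k]
    ring

theorem continuant_lsDiag_four_mul_add (s r m : ℕ) :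
    continuant lsDiag s (4 * (m + 2) + r) =
      30 * continuant lsDiag s (4 * (m + 1) + r) - continuant lsDiag s (4 * m + r) := by
  rw [show 4 * (m + 2) + r = 4 * m + r + 8 by ring, show 4 * (m + 1) + r = 4 * m + r + 4 by ring]
  exact continuant_lsDiag_add_eight s (4 * m + r)

theorem sq_sqrt_fourteen : √14 ^ 2 = 14 := Real.sq_sqrt (by norm_num)

theorem mu_sq : mu ^ 2 = 30 * mu - 1 := by
  unfold mu; linear_combination 16 * sq_sqrt_fourteen

theorem nu_sq : nu ^ 2 = 30 * nu - 1 := by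
  unfold nu; linear_combination 16 * sq_sqrt_fourteen

theorem mu_add_nu : mu + nu = 30 := by
  unfold mu nu; ring

theorem mu_sub_nu : mu - nu = 8 * √14 := by
  unfold mu nu; ring

theorem mu_mul_nu : mu * nu = 1 := by
  unfold mu nu; linear_combination -16 * sq_sqrt_fourteen

theorem one_lt_mu : 1 < mu := by
  unfold mu; linarith [Real.sqrt_nonneg 14]

theorem mu_pow_add_nu_pow_sub_two_pos {n : ℕ} (hn : n ≠ 0) : 0 < mu ^ n + nu ^ n - 2 := by
  have hx : 1 < mu ^ n := one_lt_pow₀ one_lt_mu hn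
  have hxy : mu ^ n * nu ^ n = 1 := by rw [← mul_pow, mu_mul_nu, one_pow]
  nlinarith

theorem monodromyTrace_lsDiag (j m : ℕ) :
    monodromyTrace lsDiag (4 * (m + 1)) j = mu ^ (m + 1) + nu ^ (m + 1) := by
  have hj : j % 4 < 4 := Nat.mod_lt _ (by norm_num)
  show continuant lsDiag j (4 * m + 5) - continuant lsDiag (j + 1) (4 * m + 3) = _
  refine congrFun (chebyshevRec_eq_of_eq_init (t := 30) (u := fun m =>
    continuant lsDiag j (4 * m + 5) - continuant lsDiag (j + 1) (4 * m + 3))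
    (v := fun m => mu ^ (m + 1) + nu ^ (m + 1)) (fun m => ?_) (fun m => ?_) ?_ ?_) m
  · simp only [continuant_lsDiag_four_mul_add]; ring
  · linear_combination mu ^ (m + 1) * mu_sq + nu ^ (m + 1) * nu_sq
  all_goals
    rw [continuant_lsDiag_of_mod_eq (Nat.mod_mod j 4).symm,
      continuant_lsDiag_of_mod_eq (show (j + 1) % 4 = (j % 4 + 1) % 4 by omega)]
  · interval_cases j % 4 <;> norm_num [continuant, lsDiag] <;> linear_combination -mu_add_nu
  · interval_cases j % 4 <;> norm_num [continuant, lsDiag] <;>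
      linear_combination -mu_sq - nu_sq - 30 * mu_add_nu

theorem sum_continuant_lsDiag (m : ℕ) :
    ∑ r ∈ Finset.range 4, continuant lsDiag (r + 1) (4 * (m + 1)) =
      9 * √14 / 14 * (mu ^ (m + 1) - nu ^ (m + 1)) := by
  refine congrFun (chebyshevRec_eq_of_eq_init (t := 30)
    (u := fun m => ∑ r ∈ Finset.range 4, continuant lsDiag (r + 1) (4 * m + 4))
    (v := fun m => 9 * √14 / 14 * (mu ^ (m + 1) - nu ^ (m + 1))) (fun m => ?_)
    (fun m => ?_) ?_ ?_) m
  · simp only [continuant_lsDiag_four_mul_add, Finset.sum_range_succ, Finset.sum_range_zero]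
    ring
  · linear_combination 9 * √14 / 14 * (mu ^ (m + 1) * mu_sq - nu ^ (m + 1) * nu_sq)
  · norm_num [continuant, lsDiag, Finset.sum_range_succ, mu_sub_nu]
    linear_combination -9 / 14 * 8 * sq_sqrt_fourteen
  · norm_num [continuant, lsDiag, Finset.sum_range_succ]
    rw [sq_sub_sq, mu_sub_nu, mu_add_nu]
    linear_combination -9 / 14 * 8 * 30 * sq_sqrt_fourteen

theorem LS'_posSemidef (n : ℕ) : (LS' n).PosSemidef := by
  rw [LS'_eq_cyclicJacobi]
  exact cyclicJacobi_posSemidef _ two_le_lsDiag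

theorem LS'_mul_cyclicJacobiAdj (m : ℕ) :
    LS' (m + 1) * cyclicJacobiAdj lsDiag (4 * (m + 1)) =
      (mu ^ (m + 1) + nu ^ (m + 1) - 2) • 1 := by
  rw [LS'_eq_cyclicJacobi, cyclicJacobi_mul_cyclicJacobiAdj (lsDiag_periodic_four_mul _)]
  simp only [monodromyTrace_lsDiag, smul_one_eq_diagonal]

theorem trace_cyclicJacobiAdj_lsDiag (m : ℕ) :
    (cyclicJacobiAdj lsDiag (4 * (m + 1))).trace =
      (m + 1 : ℕ) * (9 * √14 / 14 * (mu ^ (m + 1) - nu ^ (m + 1))) := by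
  have hper : Function.Periodic (fun j => continuant lsDiag (j + 1) (4 * (m + 1))) 4 :=
    fun j => by dsimp only; rw [add_right_comm, lsDiag_periodic.continuant]
  rw [trace_cyclicJacobiAdj,
    Fin.sum_univ_eq_sum_range (fun j => continuant lsDiag (j + 1) (4 * (m + 1))),
    hper.sum_range_mul, sum_continuant_lsDiag, nsmul_eq_mul]

theorem stmt_9_general (n : ℕ) :
    (LS' n).PosDef ∧
      ∀ hH : (LS' n).IsHermitian,
        ∑ j : Fin (4 * n), (hH.eigenvalues j)⁻¹
          = (9 * n * Real.sqrt 14 / 14) * (mu ^ n - nu ^ n) / (mu ^ n + nu ^ n - 2) := by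
  obtain _ | m := n
  · exact ⟨.of_dotProduct_mulVec_pos (LS'_posSemidef 0).isHermitian
      fun x hx => (hx (funext fun i => i.elim0)).elim, fun _ => by simp⟩
  set c := mu ^ (m + 1) + nu ^ (m + 1) - 2
  have hc : c ≠ 0 := (mu_pow_add_nu_pow_sub_two_pos m.succ_ne_zero).ne'
  have hmul : LS' (m + 1) * (c⁻¹ • cyclicJacobiAdj lsDiag (4 * (m + 1))) = 1 := by
    rw [Matrix.mul_smul, LS'_mul_cyclicJacobiAdj, smul_smul, inv_mul_cancel₀ hc, one_smul]
  have hpd : (LS' (m + 1)).PosDef := (LS'_posSemidef _).posDef_iff_isUnit.2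
    ((isUnit_iff_isUnit_det _).2 (isUnit_det_of_right_inverse hmul))
  refine ⟨hpd, fun hH => ?_⟩
  have htr := hH.trace_inv fun i => (hpd.eigenvalues_pos i).ne'
  simp only [RCLike.ofReal_real_eq_id, id] at htr
  rw [← htr, inv_eq_right_inv hmul, trace_smul, trace_cyclicJacobiAdj_lsDiag, smul_eq_mul]
  push_cast
  ring

theorem stmt_9 (n : ℕ) (hn : 1 ≤ n) :
    (LS' n).PosDef ∧
      ∀ hH : (LS' n).IsHermitian,
        ∑ j : Fin (4 * n), (hH.eigenvalues j)⁻¹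
          = (9 * n * Real.sqrt 14 / 14) * (mu ^ n - nu ^ n) / (mu ^ n + nu ^ n - 2) :=
  stmt_9_general n
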